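/- arXiv:2112.10186 — 2 statements merged into one kernel-verified Lean document; each statement's English description precedes it below -/
import Mathlib

section
/- Let A, B be positive bounded linear operators on a complex Hilbert space H, K a nonempty set of unit vectors, ber(T)=sup_{k∈K}|⟨T k,k⟩|, ‖T‖_ber=sup_{k,l∈K}|⟨T k,l⟩|. Then ‖A^{1/2} B^{1/2}‖_ber ≤ ber(A)^{1/2} · ber(B)^{1/2}, where A^{1/2}, B^{1/2} are the positive square roots of A and B. -/
open ContinuousLinearMap

noncomputable def berNum {H : Type*} [NormedAddCommGroup H] [InnerProductSpace ℂ H]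
    (K : Set H) (T : H →L[ℂ] H) : ℝ :=
  sSup {x : ℝ | ∃ k ∈ K, x = ‖(inner ℂ (T k) k : ℂ)‖}

noncomputable def berNorm {H : Type*} [NormedAddCommGroup H] [InnerProductSpace ℂ H]
    (K : Set H) (T : H →L[ℂ] H) : ℝ :=
  sSup {x : ℝ | ∃ k ∈ K, ∃ l ∈ K, x = ‖(inner ℂ (T k) l : ℂ)‖}

/-! Writing `S` for `A^{1/2}` and `T` for `B^{1/2}`, symmetry of `S` gives
`⟨S T k, l⟩ = ⟨T k, S l⟩`, so by Cauchy–Schwarz `|⟨S T k, l⟩| ≤ ‖T k‖ ‖S l‖`.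
Each factor is controlled by a Berezin number: `‖S l‖² = ⟨A l, l⟩ ≤ ber(A)`,
and likewise `‖T k‖² ≤ ber(B)`. -/

open scoped InnerProductSpace

section Berezin

variable {H : Type*} [NormedAddCommGroup H] [InnerProductSpace ℂ H] {K : Set H}

lemma norm_inner_self_le_berNum (hK : ∀ k ∈ K, ‖k‖ ≤ 1) (T : H →L[ℂ] H) {k : H}
    (hk : k ∈ K) : ‖⟪T k, k⟫_ℂ‖ ≤ berNum K T := by
  refine le_csSup ⟨‖T‖, ?_⟩ ⟨k, hk, rfl⟩
  rintro x ⟨k, hk, rfl⟩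
  calc ‖⟪T k, k⟫_ℂ‖ ≤ ‖T k‖ * ‖k‖ := norm_inner_le_norm _ _
    _ ≤ ‖T‖ * ‖k‖ * ‖k‖ := by gcongr; exact T.le_opNorm k
    _ ≤ ‖T‖ * 1 * 1 := by gcongr <;> exact hK k hk
    _ = ‖T‖ := by ring

lemma berNorm_le {T : H →L[ℂ] H} {c : ℝ} (hc : 0 ≤ c)
    (h : ∀ k ∈ K, ∀ l ∈ K, ‖⟪T k, l⟫_ℂ‖ ≤ c) : berNorm K T ≤ c :=
  Real.sSup_le (by rintro x ⟨k, hk, l, hl, rfl⟩; exact h k hk l hl) hc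

lemma norm_apply_le_sqrt_berNum_mul_self (hK : ∀ k ∈ K, ‖k‖ ≤ 1) {S : H →L[ℂ] H}
    (hS : (S : H →ₗ[ℂ] H).IsSymmetric) {k : H} (hk : k ∈ K) :
    ‖S k‖ ≤ √(berNum K (S * S)) := by
  refine Real.le_sqrt_of_sq_le ?_
  calc ‖S k‖ ^ 2 = RCLike.re ⟪S (S k), k⟫_ℂ :=
        (inner_self_eq_norm_sq (S k)).symm.trans (congrArg RCLike.re (hS (S k) k).symm)
    _ ≤ ‖⟪(S * S) k, k⟫_ℂ‖ := RCLike.re_le_norm _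
    _ ≤ berNum K (S * S) := norm_inner_self_le_berNum hK _ hk

end Berezin

theorem berNorm_sqrt_mul_sqrt_general {H : Type*} [NormedAddCommGroup H] [InnerProductSpace ℂ H]
    (A B S T : H →L[ℂ] H)
    (hS : S.IsPositive) (hT : T.IsPositive) (hS2 : S * S = A) (hT2 : T * T = B) (K : Set H) (hK1 : ∀ k ∈ K, ‖k‖ = 1) :
    berNorm K (S * T) ≤ Real.sqrt (berNum K A) * Real.sqrt (berNum K B) := by
  subst hS2 hT2
  have hK : ∀ k ∈ K, ‖k‖ ≤ 1 := fun k hk => (hK1 k hk).le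
  refine berNorm_le (by positivity) fun k hk l hl => ?_
  calc ‖⟪(S * T) k, l⟫_ℂ‖ = ‖⟪T k, S l⟫_ℂ‖ := congrArg norm (hS.isSymmetric (T k) l)
    _ ≤ ‖T k‖ * ‖S l‖ := norm_inner_le_norm _ _
    _ ≤ √(berNum K (T * T)) * √(berNum K (S * S)) :=
        mul_le_mul (norm_apply_le_sqrt_berNum_mul_self hK hT.isSymmetric hk)
          (norm_apply_le_sqrt_berNum_mul_self hK hS.isSymmetric hl) (norm_nonneg _) (Real.sqrt_nonneg _)
    _ = √(berNum K (S * S)) * √(berNum K (T * T)) := mul_comm _ _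

theorem berNorm_sqrt_mul_sqrt {H : Type*} [NormedAddCommGroup H] [InnerProductSpace ℂ H] [CompleteSpace H]
    (A B S T : H →L[ℂ] H) (hA : A.IsPositive) (hB : B.IsPositive)
    (hS : S.IsPositive) (hT : T.IsPositive) (hS2 : S * S = A) (hT2 : T * T = B) (K : Set H) (hK : K.Nonempty) (hK1 : ∀ k ∈ K, ‖k‖ = 1) :
    berNorm K (S * T) ≤ Real.sqrt (berNum K A) * Real.sqrt (berNum K B) :=
  berNorm_sqrt_mul_sqrt_general A B S T hS hT hS2 hT2 K hK1
end

section
/- Let A, B be bounded linear operators on a complex Hilbert space H, K a nonempty set of unit vectors, ber(T)=sup_{k∈K}|⟨T k,k⟩|, ‖T‖_ber=sup_{k,l∈K}|⟨T k,l⟩|. Then ‖A + B‖_ber² ≤ ber(A*A + B*B) + 2 ber(B*A). -/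
open ContinuousLinearMap

/-! The bound holds before taking suprema: for unit vectors `k` and `l`,
`|⟪(A + B) k, l⟫|² ≤ ‖(A + B) k‖² = Re ⟪(A†A + B†B) k, k⟫ + 2 Re ⟪(B†A) k, k⟫`,
and each real part is at most the corresponding Berezin number. -/

section Berezin

variable {H : Type*} [NormedAddCommGroup H] [InnerProductSpace ℂ H] {K : Set H}

lemma berNum_nonneg (T : H →L[ℂ] H) : 0 ≤ berNum K T :=
  Real.sSup_nonneg <| by rintro _ ⟨k, -, rfl⟩; exact norm_nonneg _

lemma norm_inner_le_berNum (hK1 : ∀ k ∈ K, ‖k‖ = 1) (T : H →L[ℂ] H) {k : H} (hk : k ∈ K) :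
    ‖(inner ℂ (T k) k : ℂ)‖ ≤ berNum K T := by
  refine le_csSup ⟨‖T‖, ?_⟩ ⟨k, hk, rfl⟩
  rintro _ ⟨j, hj, rfl⟩
  calc ‖(inner ℂ (T j) j : ℂ)‖ ≤ ‖T j‖ * ‖j‖ := norm_inner_le_norm _ _
    _ ≤ ‖T‖ := by simpa [hK1 j hj] using T.le_opNorm j

lemma berNorm_nonneg (T : H →L[ℂ] H) : 0 ≤ berNorm K T :=
  Real.sSup_nonneg <| by rintro _ ⟨k, -, l, -, rfl⟩; exact norm_nonneg _

lemma berNorm_le_of_forall_norm_apply_le (hK1 : ∀ k ∈ K, ‖k‖ = 1) {T : H →L[ℂ] H} {c : ℝ}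
    (hc : 0 ≤ c) (h : ∀ k ∈ K, ‖T k‖ ≤ c) : berNorm K T ≤ c := by
  refine Real.sSup_le ?_ hc
  rintro _ ⟨k, hk, l, hl, rfl⟩
  calc ‖(inner ℂ (T k) l : ℂ)‖ ≤ ‖T k‖ * ‖l‖ := norm_inner_le_norm _ _
    _ = ‖T k‖ := by rw [hK1 l hl, mul_one]
    _ ≤ c := h k hk

variable [CompleteSpace H]

lemma inner_adjoint_mul_apply (A B : H →L[ℂ] H) (k : H) :
    (inner ℂ ((adjoint B * A) k) k : ℂ) = inner ℂ (A k) (B k) :=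
  adjoint_inner_left B k (A k)

lemma norm_add_apply_sq (A B : H →L[ℂ] H) (k : H) :
    ‖(A + B) k‖ ^ 2 = (inner ℂ ((adjoint A * A + adjoint B * B) k) k : ℂ).re
      + 2 * (inner ℂ ((adjoint B * A) k) k : ℂ).re := by
  rw [add_apply, add_apply, inner_add_left, inner_adjoint_mul_apply, inner_adjoint_mul_apply,
    inner_adjoint_mul_apply, Complex.add_re, @norm_add_sq ℂ, ← inner_self_eq_norm_sq (𝕜 := ℂ),
    ← inner_self_eq_norm_sq (𝕜 := ℂ)]
  simp only [RCLike.re_to_complex]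
  ring

lemma norm_add_apply_sq_le (hK1 : ∀ k ∈ K, ‖k‖ = 1) (A B : H →L[ℂ] H) {k : H} (hk : k ∈ K) :
    ‖(A + B) k‖ ^ 2 ≤ berNum K (adjoint A * A + adjoint B * B) + 2 * berNum K (adjoint B * A) := by
  rw [norm_add_apply_sq]
  gcongr <;> exact (Complex.re_le_norm _).trans (norm_inner_le_berNum hK1 _ hk)

end Berezin

theorem berNorm_add_sq'_general {H : Type*} [NormedAddCommGroup H] [InnerProductSpace ℂ H] [CompleteSpace H]
    (A B : H →L[ℂ] H) (K : Set H) (hK1 : ∀ k ∈ K, ‖k‖ = 1) :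
    (berNorm K (A + B)) ^ 2
      ≤ berNum K (adjoint A * A + adjoint B * B) + 2 * berNum K (adjoint B * A) := by
  set M := berNum K (adjoint A * A + adjoint B * B) + 2 * berNum K (adjoint B * A)
  have hM : 0 ≤ M := add_nonneg (berNum_nonneg _) (mul_nonneg zero_le_two (berNum_nonneg _))
  have hle : berNorm K (A + B) ≤ √M :=
    berNorm_le_of_forall_norm_apply_le hK1 (Real.sqrt_nonneg M) fun k hk =>
      (le_abs_self _).trans (Real.abs_le_sqrt (norm_add_apply_sq_le hK1 A B hk))
  calc berNorm K (A + B) ^ 2 ≤ √M ^ 2 := pow_le_pow_left₀ (berNorm_nonneg _) hle 2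
    _ = M := Real.sq_sqrt hM

theorem berNorm_add_sq' {H : Type*} [NormedAddCommGroup H] [InnerProductSpace ℂ H] [CompleteSpace H]
    (A B : H →L[ℂ] H) (K : Set H) (hK : K.Nonempty) (hK1 : ∀ k ∈ K, ‖k‖ = 1) :
    (berNorm K (A + B)) ^ 2
      ≤ berNum K (adjoint A * A + adjoint B * B) + 2 * berNum K (adjoint B * A) :=
  berNorm_add_sq'_general A B K hK1
end
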